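/- arXiv:1707.02281 — 7 statements merged into one kernel-verified Lean document; each statement's English description precedes it below -/
import Mathlib

section
/- Let g ∈ P_d be a sandpile polynomial and define f by f_n = |g_n| for all n ∈ Z^d. Then the product h = f·g is again a sandpile polynomial, i.e., h ∈ P_d. -/
/-!
Let `T = ∑_{j ≠ 0} |g j|`, so that `T < g 0`. For `n ≠ 0`, the terms `k = 0` and `k = n` of
`h n = ∑_k |g k| * g (n - k)` cancel (`g 0 * g n + |g n| * g 0 = 0`), and every other term is
`≤ 0`. Since `g j ≥ -|g j| ≥ -T` for `j ≠ 0`, the constant term is at least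
`g 0 ^ 2 - T ^ 2 > 0`. Finally the coefficient sum of a product is the product of the
coefficient sums, `(∑ |g|) * (∑ g) > 0`.
-/

/-- Laurent polynomials with integer coefficients in `d` variables, identified with
finitely supported functions `ℤ^d → ℤ`. A sandpile polynomial satisfies `h 0 > 0`,
`h j ≤ 0` for `j ≠ 0`, and `Σ_j h_j > 0` (equivalently `2 h_0 > Σ_j |h_j| > 0`). -/
def IsSandpileFun {d : ℕ} (h : (Fin d → ℤ) → ℤ) : Prop :=
  (Function.support h).Finite ∧ 0 < h 0 ∧ (∀ j : Fin d → ℤ, j ≠ 0 → h j ≤ 0) ∧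
    0 < ∑ᶠ j, h j

open Finset Function

section Convolution

variable {G R : Type*} [AddCommGroup G] [NonUnitalNonAssocSemiring R]

theorem Function.HasFiniteSupport.const_mul_comp_sub (r : R) {g : G → R}
    (hg : g.HasFiniteSupport) (k : G) : (fun n => r * g (n - k)).HasFiniteSupport :=
  (hg.fun_comp_of_injective sub_left_injective).fun_mul_right fun _ => r

theorem Function.HasFiniteSupport.sum_mul_sub (A : Finset G) (f : G → R) {g : G → R}
    (hg : g.HasFiniteSupport) : (fun n => ∑ k ∈ A, f k * g (n - k)).HasFiniteSupport :=
  HasFiniteSupport.sum (fun k => hg.const_mul_comp_sub (f k) k) A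

theorem finsum_sum_mul_sub (A : Finset G) (f : G → R) {g : G → R} (hg : g.HasFiniteSupport) :
    ∑ᶠ n, ∑ k ∈ A, f k * g (n - k) = (∑ k ∈ A, f k) * ∑ᶠ n, g n := by
  rw [finsum_sum_comm _ _ fun k _ => hg.const_mul_comp_sub (f k) k, sum_mul]
  refine sum_congr rfl fun k _ => ?_
  rw [← mul_finsum' _ _ (hg.fun_comp_of_injective sub_left_injective)]
  exact congrArg (f k * ·) (finsum_comp_equiv (Equiv.subRight k))

end Convolution

namespace Finsupp

variable {G : Type*} [AddCommGroup G] [DecidableEq G] {g : G →₀ ℤ}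

theorem abs_le_sum_abs_support_erase_zero {k : G} (hk : k ≠ 0) :
    |g k| ≤ ∑ j ∈ g.support.erase 0, |g j| := by
  by_cases hkg : k ∈ g.support
  · exact Finset.single_le_sum (fun j _ => abs_nonneg (g j)) (mem_erase.2 ⟨hk, hkg⟩)
  · rw [notMem_support_iff.1 hkg, abs_zero]
    exact Finset.sum_nonneg fun j _ => abs_nonneg (g j)

theorem sum_abs_support_erase_zero (h0 : 0 < g 0) (hneg : ∀ j ≠ 0, g j ≤ 0) :
    ∑ j ∈ g.support.erase 0, |g j| = g 0 - ∑ j ∈ g.support, g j := by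
  rw [← Finset.add_sum_erase _ _ (mem_support_iff.2 h0.ne'), sub_add_cancel_left,
    ← Finset.sum_neg_distrib]
  exact Finset.sum_congr rfl fun j hj => abs_of_nonpos (hneg j (ne_of_mem_erase hj))

theorem sum_abs_mul_sub_zero_pos (hT : ∑ j ∈ g.support.erase 0, |g j| < g 0) :
    0 < ∑ k ∈ g.support, |g k| * g (0 - k) := by
  set T := ∑ j ∈ g.support.erase 0, |g j|
  have hT0 : 0 ≤ T := Finset.sum_nonneg fun j _ => abs_nonneg (g j)
  have h0 : 0 < g 0 := hT0.trans_lt hT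
  have hbound : ∀ k ∈ g.support.erase 0, |g k| * -T ≤ |g k| * g (0 - k) := fun k hk =>
    mul_le_mul_of_nonneg_left
      ((neg_le_neg (abs_le_sum_abs_support_erase_zero (by simpa using ne_of_mem_erase hk))).trans
        (neg_abs_le _))
      (abs_nonneg _)
  have hsum := Finset.sum_le_sum hbound
  rw [← Finset.sum_mul] at hsum
  rw [← Finset.add_sum_erase _ _ (mem_support_iff.2 h0.ne'), sub_zero, abs_of_pos h0]
  nlinarith

theorem sum_abs_mul_sub_nonpos (h0 : 0 < g 0) (hneg : ∀ j ≠ 0, g j ≤ 0) {n : G}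
    (hn : n ≠ 0) :
    ∑ k ∈ g.support, |g k| * g (n - k) ≤ 0 := by
  have hterm : ∀ k ∈ g.support.erase 0,
      |g k| * g (n - k) ≤ if k = n then |g n| * g 0 else 0 := by
    intro k _
    split_ifs with hkn
    · rw [hkn, sub_self]
    · exact mul_nonpos_of_nonneg_of_nonpos (abs_nonneg _) (hneg _ (sub_ne_zero.2 (Ne.symm hkn)))
  have hsum := (Finset.sum_le_sum hterm).trans_eq (Finset.sum_ite_eq' _ _ _)
  rw [← Finset.add_sum_erase _ _ (mem_support_iff.2 h0.ne'), sub_zero, abs_of_pos h0]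
  rw [abs_of_nonpos (hneg n hn)] at hsum
  have hn0 : g 0 * g n ≤ 0 := mul_nonpos_of_nonneg_of_nonpos h0.le (hneg n hn)
  split_ifs at hsum <;> linarith

end Finsupp

/-- If `g` is a sandpile polynomial and `f` is defined by `f n = |g n|`, then the
product (convolution) `h = f · g`, with `h n = Σ_k f k * g (n - k)`, is again a
sandpile polynomial. -/
theorem stmt1 {d : ℕ} (g : (Fin d → ℤ) →₀ ℤ)
    (hg : IsSandpileFun (g : (Fin d → ℤ) → ℤ)) :
    IsSandpileFun (fun n : Fin d → ℤ => ∑ k ∈ g.support, |g k| * g (n - k)) := by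
  obtain ⟨hfin, h0, hneg, hsum⟩ := hg
  rw [finsum_eq_sum_of_support_subset _ g.fun_support_eq.subset] at hsum
  have hT : ∑ j ∈ g.support.erase 0, |g j| < g 0 := by
    rw [Finsupp.sum_abs_support_erase_zero h0 hneg]
    linarith
  refine ⟨HasFiniteSupport.sum_mul_sub _ _ hfin, Finsupp.sum_abs_mul_sub_zero_pos hT,
    fun n hn => Finsupp.sum_abs_mul_sub_nonpos h0 hneg hn, ?_⟩
  rw [finsum_sum_mul_sub _ _ hfin, finsum_eq_sum_of_support_subset _ g.fun_support_eq.subset]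
  have h0_mem : (0 : Fin d → ℤ) ∈ g.support := Finsupp.mem_support_iff.2 h0.ne'
  exact mul_pos (Finset.sum_pos' (fun k _ => abs_nonneg _) ⟨0, h0_mem, abs_pos.2 h0.ne'⟩) hsum
end

section
/- Let A be a real n×n matrix that is strictly diagonally dominant, i.e., |A_{ii}| > Σ_{j≠i} |A_{ij}| for every i. Then A is invertible and the operator norm of A^{-1} induced by the maximum norm satisfies ‖A^{-1}‖_∞ ≤ max_i 1/(|A_{ii}| − Σ_{j≠i} |A_{ij}|). -/
/-!
If `‖x i‖` is the largest coordinate of `x`, then row `i` of `A *ᵥ x` satisfies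
`(‖A i i‖ - ∑_{j ≠ i} ‖A i j‖) ‖x i‖ ≤ ‖(A *ᵥ x) i‖`, so `‖x‖ ≤ C ‖A *ᵥ x‖` with
`C = max_i (‖A i i‖ - ∑_{j ≠ i} ‖A i j‖)⁻¹`. Applied to `x = A⁻¹ *ᵥ y`, this bounds the
operator norm of `A⁻¹` for the sup norm by `C`.
-/

open Finset

attribute [local instance] Matrix.linftyOpNormedAddCommGroup

namespace Matrix

variable {𝕜 ι : Type*} [Fintype ι] [DecidableEq ι]

section NormedField

variable [NormedField 𝕜]

def diagDominanceMargin (A : Matrix ι ι 𝕜) (i : ι) : ℝ :=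
  ‖A i i‖ - ∑ j ∈ univ.erase i, ‖A i j‖

theorem diagDominanceMargin_mul_le_norm_mulVec_apply (A : Matrix ι ι 𝕜) (x : ι → 𝕜) {i : ι}
    (hi : ∀ j, ‖x j‖ ≤ ‖x i‖) :
    A.diagDominanceMargin i * ‖x i‖ ≤ ‖(A *ᵥ x) i‖ := by
  have hrow : (A *ᵥ x) i = A i i * x i + ∑ j ∈ univ.erase i, A i j * x j :=
    (add_sum_erase _ (fun j => A i j * x j) (mem_univ i)).symm
  have hoff : ‖∑ j ∈ univ.erase i, A i j * x j‖ ≤ (∑ j ∈ univ.erase i, ‖A i j‖) * ‖x i‖ :=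
    calc ‖∑ j ∈ univ.erase i, A i j * x j‖ ≤ ∑ j ∈ univ.erase i, ‖A i j‖ * ‖x j‖ :=
          norm_sum_le_of_le _ fun j _ => (norm_mul _ _).le
      _ ≤ (∑ j ∈ univ.erase i, ‖A i j‖) * ‖x i‖ := by
          rw [sum_mul]
          exact sum_le_sum fun j _ => mul_le_mul_of_nonneg_left (hi j) (norm_nonneg _)
  have hdiag : ‖A i i * x i‖ ≤ ‖(A *ᵥ x) i‖ + ‖∑ j ∈ univ.erase i, A i j * x j‖ := by
    rw [hrow]
    exact norm_le_add_norm_add _ _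
  rw [norm_mul] at hdiag
  rw [diagDominanceMargin, sub_mul]
  linarith

theorem norm_le_iSup_inv_diagDominanceMargin_mul (A : Matrix ι ι 𝕜)
    (hA : ∀ i, 0 < A.diagDominanceMargin i) (x : ι → 𝕜) :
    ‖x‖ ≤ (⨆ i, (A.diagDominanceMargin i)⁻¹) * ‖A *ᵥ x‖ := by
  cases isEmpty_or_nonempty ι
  · simp [norm_of_subsingleton]
  obtain ⟨i, hi⟩ := Finite.exists_max fun j => ‖x j‖
  have hbdd : BddAbove (Set.range fun j => (A.diagDominanceMargin j)⁻¹) :=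
    (Set.finite_range _).bddAbove
  calc ‖x‖ ≤ ‖x i‖ := (pi_norm_le_iff_of_nonneg (norm_nonneg _)).2 hi
    _ ≤ (A.diagDominanceMargin i)⁻¹ * ‖(A *ᵥ x) i‖ := by
        rw [le_inv_mul_iff₀ (hA i)]
        exact A.diagDominanceMargin_mul_le_norm_mulVec_apply x hi
    _ ≤ (⨆ j, (A.diagDominanceMargin j)⁻¹) * ‖A *ᵥ x‖ :=
        mul_le_mul (le_ciSup hbdd i) (norm_le_pi_norm _ i) (norm_nonneg _)
          (Real.iSup_nonneg fun j => (inv_pos.2 (hA j)).le)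

end NormedField

section RCLike

variable [RCLike 𝕜]

theorem linfty_opNorm_inv_le_of_forall_norm_le {A : Matrix ι ι 𝕜} {C : ℝ} (hC : 0 ≤ C)
    (h : ∀ x, ‖x‖ ≤ C * ‖A *ᵥ x‖) : ‖A⁻¹‖ ≤ C := by
  by_cases hA : IsUnit A.det
  · rw [linfty_opNorm_eq_opNorm]
    refine ContinuousLinearMap.opNorm_le_bound _ hC fun y => ?_
    simpa [mulVec_mulVec, mul_nonsing_inv A hA] using h (A⁻¹ *ᵥ y)
  · rw [nonsing_inv_apply_not_isUnit A hA, norm_zero]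
    exact hC

theorem linfty_opNorm_inv_le_iSup_inv_diagDominanceMargin (A : Matrix ι ι 𝕜)
    (hA : ∀ i, 0 < A.diagDominanceMargin i) :
    ‖A⁻¹‖ ≤ ⨆ i, (A.diagDominanceMargin i)⁻¹ :=
  linfty_opNorm_inv_le_of_forall_norm_le (Real.iSup_nonneg fun i => (inv_pos.2 (hA i)).le)
    (A.norm_le_iSup_inv_diagDominanceMargin_mul hA)

end RCLike

end Matrix

/-- Varah's bound: a strictly diagonally dominant real matrix `A`
(`Σ_{j ≠ i} |A i j| < |A i i|` for every `i`) is invertible, and the operator norm of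
`A⁻¹` induced by the maximum norm (the `L∞` operator norm, `‖M‖ = max_i Σ_j |M i j|`)
satisfies `‖A⁻¹‖ ≤ max_i (|A i i| - Σ_{j ≠ i} |A i j|)⁻¹`. -/
theorem stmt4 {n : ℕ} (A : Matrix (Fin n) (Fin n) ℝ)
    (hdd : ∀ i, ∑ j ∈ univ.erase i, |A i j| < |A i i|) :
    IsUnit A ∧ ‖A⁻¹‖ ≤ ⨆ i, (|A i i| - ∑ j ∈ univ.erase i, |A i j|)⁻¹ := by
  have hdd' : ∀ i, ∑ j ∈ univ.erase i, ‖A i j‖ < ‖A i i‖ := by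
    simpa only [Real.norm_eq_abs] using hdd
  refine ⟨(A.isUnit_iff_isUnit_det).2 (det_ne_zero_of_sum_row_lt_diag hdd').isUnit, ?_⟩
  simpa only [Matrix.diagDominanceMargin, Real.norm_eq_abs] using
    A.linfty_opNorm_inv_le_iSup_inv_diagDominanceMargin fun i => sub_pos.2 (hdd' i)
end

section
/- Let g ∈ P_d be a sandpile polynomial with associated polynomial f ∈ P_d^+ given by f_n = |g_n|, and let F ⊂ Z^d be finite. Then the matrix Δ' = Δ^g Δ^f (product of the toppling matrices of g and f on F) satisfies Δ'_{ij} ≤ 0 for all i ≠ j in F, and Σ_{j∈F} Δ'_{ij} > 0 for all i ∈ F; hence Δ' is a toppling matrix. -/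
/-- A sandpile polynomial: `g 0 > 0`, `g j ≤ 0` for `j ≠ 0`, and `Σ_j g_j > 0`. -/
def IsSandpile {d : ℕ} (g : (Fin d → ℤ) →₀ ℤ) : Prop :=
  0 < g 0 ∧ (∀ j : Fin d → ℤ, j ≠ 0 → g j ≤ 0) ∧ 0 < ∑ j ∈ g.support, g j

/-!
Write `g₀ = g 0` and `B = Σ_{m ≠ 0} |g m|`, so that the sandpile condition says `B < g₀`.
Off the diagonal, the two terms `k = i` and `k = j` of `Σ_k g(i-k) |g(k-j)|` cancel and all
others are `≤ 0`. For the row sums, put `S k = Σ_{j ∈ F} |g(k-j)| ≤ g₀ + B` and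
`A = Σ_{k ∈ F, k ≠ i} |g(i-k)| ≤ B`; then `S i = g₀ + A` and the row sum is at least
`g₀ (g₀ + A) - A (g₀ + B) = g₀² - A B > 0`.
-/

open Finset

variable {G R : Type*} [AddGroup G] [DecidableEq G]

section Shift

variable [AddCommGroup R] [LinearOrder R] [IsOrderedAddMonoid R]

lemma sum_abs_apply_sub_le {g : G → R} {E t : Finset G} {i : G}
    (ht : ∀ j ∈ E, g (i - j) ≠ 0 → i - j ∈ t) :
    ∑ j ∈ E, |g (i - j)| ≤ ∑ m ∈ t, |g m| := by
  rw [← sum_image (f := fun m => |g m|) fun _ _ _ _ h => sub_right_injective h,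
    ← sum_filter_ne_zero]
  refine sum_le_sum_of_subset_of_nonneg ?_ fun _ _ _ => abs_nonneg _
  intro m hm
  obtain ⟨hm, hgm⟩ := mem_filter.mp hm
  obtain ⟨j, hj, rfl⟩ := mem_image.mp hm
  exact ht j hj (abs_ne_zero.mp hgm)

end Shift

variable [CommRing R] [LinearOrder R] [IsStrictOrderedRing R]

lemma sum_support_eq_sub_sum_abs_erase_zero {g : G →₀ R} (hg0 : g 0 ≠ 0)
    (hneg : ∀ j, j ≠ 0 → g j ≤ 0) :
    ∑ m ∈ g.support, g m = g 0 - ∑ m ∈ g.support.erase 0, |g m| := by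
  rw [← add_sum_erase _ _ (Finsupp.mem_support_iff.mpr hg0), sub_eq_add_neg,
    ← sum_neg_distrib]
  refine congrArg _ (sum_congr rfl fun m hm => ?_)
  rw [abs_of_nonpos (hneg m (ne_of_mem_erase hm)), neg_neg]

lemma sum_mul_abs_nonpos_of_ne {g : G → R} (hg0 : 0 ≤ g 0) (hneg : ∀ j, j ≠ 0 → g j ≤ 0)
    {F : Finset G} {i j : G} (hi : i ∈ F) (hj : j ∈ F) (hij : i ≠ j) :
    ∑ k ∈ F, g (i - k) * |g (k - j)| ≤ 0 := by
  have hjF : j ∈ F.erase i := mem_erase.mpr ⟨hij.symm, hj⟩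
  rw [← add_sum_erase _ _ hi, ← add_sum_erase _ _ hjF]
  have hcancel : g (i - i) * |g (i - j)| + g (i - j) * |g (j - j)| = 0 := by
    rw [sub_self, sub_self, abs_of_nonneg hg0, abs_of_nonpos (hneg _ (sub_ne_zero.mpr hij))]
    ring
  have hrest : ∑ k ∈ (F.erase i).erase j, g (i - k) * |g (k - j)| ≤ 0 :=
    sum_nonpos fun k hk => mul_nonpos_of_nonpos_of_nonneg
      (hneg _ (sub_ne_zero.mpr (ne_of_mem_erase (mem_of_mem_erase hk)).symm)) (abs_nonneg _)
  linarith

lemma sum_sum_mul_abs_pos {g : G →₀ R} (hg0 : 0 < g 0) (hneg : ∀ j, j ≠ 0 → g j ≤ 0)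
    (hdom : ∑ m ∈ g.support.erase 0, |g m| < g 0) {F : Finset G} {i : G} (hi : i ∈ F) :
    0 < ∑ j ∈ F, ∑ k ∈ F, g (i - k) * |g (k - j)| := by
  set B := ∑ m ∈ g.support.erase 0, |g m|
  set A := ∑ k ∈ F.erase i, |g (i - k)|
  set S := fun k => ∑ j ∈ F, |g (k - j)|
  have hneg' : ∀ k ∈ F.erase i, g (i - k) = -|g (i - k)| := fun k hk => by
    rw [abs_of_nonpos (hneg _ (sub_ne_zero.mpr (ne_of_mem_erase hk).symm)), neg_neg]
  have hA : A ≤ B := sum_abs_apply_sub_le fun k hk hk0 => mem_erase.mpr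
    ⟨sub_ne_zero.mpr (ne_of_mem_erase hk).symm, Finsupp.mem_support_iff.mpr hk0⟩
  have hS : ∀ k, S k ≤ g 0 + B := fun k => calc
    S k ≤ ∑ m ∈ g.support, |g m| := sum_abs_apply_sub_le fun _ _ => Finsupp.mem_support_iff.mpr
    _ = g 0 + B := by
      rw [← add_sum_erase _ _ (Finsupp.mem_support_iff.mpr hg0.ne'), abs_of_pos hg0]
  have hSi : S i = g 0 + A := by
    show ∑ j ∈ F, |g (i - j)| = g 0 + A
    rw [← add_sum_erase _ _ hi, sub_self, abs_of_pos hg0]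
  have hoff : -(A * (g 0 + B)) ≤ ∑ k ∈ F.erase i, g (i - k) * S k := by
    rw [sum_congr rfl fun k hk => by rw [hneg' k hk, neg_mul], sum_neg_distrib, neg_le_neg_iff,
      sum_mul]
    exact sum_le_sum fun k _ => mul_le_mul_of_nonneg_left (hS k) (abs_nonneg _)
  have hrow : ∑ j ∈ F, ∑ k ∈ F, g (i - k) * |g (k - j)| =
      g 0 * S i + ∑ k ∈ F.erase i, g (i - k) * S k := by
    simp only [S, mul_sum]
    rw [sum_comm, ← add_sum_erase _ _ hi, sub_self]
  have hA0 : 0 ≤ A := sum_nonneg fun _ _ => abs_nonneg _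
  rw [hrow, hSi]
  nlinarith

/-- Let `g` be a sandpile polynomial with associated polynomial `f`, `f n = |g n|`, and
let `F ⊂ ℤ^d` be finite. Then the matrix `Δ' = Δ^g Δ^f`, i.e.
`Δ'_{ij} = Σ_{k ∈ F} g (i - k) * f (k - j)`, satisfies `Δ'_{ij} ≤ 0` for all `i ≠ j`
in `F` and `Σ_{j ∈ F} Δ'_{ij} > 0` for all `i ∈ F`; hence `Δ'` is a toppling matrix. -/
theorem stmt5 {d : ℕ} (g : (Fin d → ℤ) →₀ ℤ) (hg : IsSandpile g)
    (f : (Fin d → ℤ) → ℤ) (hf : ∀ n, f n = |g n|)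
    (F : Finset (Fin d → ℤ)) :
    (∀ i ∈ F, ∀ j ∈ F, i ≠ j → (∑ k ∈ F, g (i - k) * f (k - j)) ≤ 0) ∧
    (∀ i ∈ F, 0 < ∑ j ∈ F, ∑ k ∈ F, g (i - k) * f (k - j)) := by
  obtain ⟨hg0, hneg, hsum⟩ := hg
  obtain rfl : f = fun n => |g n| := funext hf
  have hdom : ∑ m ∈ g.support.erase 0, |g m| < g 0 := by
    rw [sum_support_eq_sub_sum_abs_erase_zero hg0.ne' hneg] at hsum
    linarith
  exact ⟨fun i hi j hj hij => sum_mul_abs_nonpos_of_ne hg0.le hneg hi hj hij,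
    fun i hi => sum_sum_mul_abs_pos hg0 hneg hdom hi⟩
end

section
/- Let h = fg ∈ P_d with f,g ∈ R_d having no common factor, and suppose for every finite F the matrix Δ' = Δ^g Δ^f is a toppling matrix. Set γ' = Σ_{k ∈ G^+} f_k g_{−k}, where G^+ = {k : f_k g_{−k} > 0}. Then γ' ≥ γ_h > 0 and every recurrent configuration v ∈ R'_F satisfies 0 ≤ v_i ≤ γ' − 1 for all i ∈ F. -/
/-- Recurrent configurations on a finite set `F` for a toppling kernel `Δ`, via the
burning algorithm: `v` is stable (`0 ≤ v i < Δ_{ii}` on `F`) and for every nonempty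
`E ⊆ F` there exists `i ∈ E` with `v i ≥ -Σ_{j ∈ E, j ≠ i} Δ_{ji}`. -/
def IsRecurrentOn {d : ℕ} (Δ : (Fin d → ℤ) → (Fin d → ℤ) → ℤ)
    (F : Finset (Fin d → ℤ)) (v : (Fin d → ℤ) → ℤ) : Prop :=
  (∀ i ∈ F, 0 ≤ v i ∧ v i < Δ i i) ∧
  ∀ E : Finset (Fin d → ℤ), E ⊆ F → E.Nonempty →
    ∃ i ∈ E, -∑ j ∈ E.erase i, Δ j i ≤ v i

open Finset

theorem Finset.sum_le_sum_filter_pos {ι M : Type*} [AddCommMonoid M] [LinearOrder M]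
    [IsOrderedAddMonoid M] {s t : Finset ι} {a : ι → M} (hts : ∀ j ∈ t, 0 < a j → j ∈ s) :
    ∑ j ∈ t, a j ≤ ∑ j ∈ s with 0 < a j, a j :=
  calc ∑ j ∈ t, a j
      ≤ ∑ j ∈ t with 0 < a j, a j := by
        rw [← sum_filter_add_sum_filter_not t (0 < a ·)]
        exact add_le_of_nonpos_right (sum_nonpos fun j hj => not_lt.mp (mem_filter.mp hj).2)
    _ ≤ ∑ j ∈ s with 0 < a j, a j :=
        sum_le_sum_of_subset_of_nonneg
          (fun j hj => by rw [mem_filter] at hj ⊢; exact ⟨hts j hj.1 hj.2, hj.2⟩)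
          fun j hj _ => (mem_filter.mp hj).2.le

theorem Finsupp.sum_shift_mul_le_sum_filter_pos {G R : Type*} [AddCommGroup G] [CommRing R]
    [LinearOrder R] [IsStrictOrderedRing R] (f g : G →₀ R) (F : Finset G) (i : G) :
    ∑ k ∈ F, g (i - k) * f (k - i) ≤ ∑ k ∈ f.support with 0 < f k * g (-k), f k * g (-k) := by
  have hshift : ∑ k ∈ F, g (i - k) * f (k - i) =
      ∑ j ∈ F.map (Equiv.subRight i).toEmbedding, f j * g (-j) := by
    rw [sum_map]
    refine Finset.sum_congr rfl fun k _ => ?_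
    simp only [Equiv.coe_toEmbedding, Equiv.subRight_apply, neg_sub, mul_comm]
  rw [hshift]
  refine sum_le_sum_filter_pos fun j _ hpos => Finsupp.mem_support_iff.mpr fun hj => ?_
  simp [hj] at hpos

theorem stmt7_general {d : ℕ} (f g : (Fin d → ℤ) →₀ ℤ)
    (hsp : IsSandpileFun (fun n : Fin d → ℤ => ∑ k ∈ f.support, f k * g (n - k))) :
    (0 < ∑ k ∈ f.support, f k * g (0 - k)) ∧
    (∑ k ∈ f.support, f k * g (0 - k)) ≤
      (∑ k ∈ f.support.filter (fun k => 0 < f k * g (-k)), f k * g (-k)) ∧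
    ∀ F : Finset (Fin d → ℤ), ∀ v : (Fin d → ℤ) → ℤ,
      IsRecurrentOn (fun i j => ∑ k ∈ F, g (i - k) * f (k - j)) F v →
      ∀ i ∈ F, 0 ≤ v i ∧
        v i ≤ (∑ k ∈ f.support.filter (fun k => 0 < f k * g (-k)), f k * g (-k)) - 1 := by
  refine ⟨hsp.2.1, ?_, fun F v hv i hi => ?_⟩
  · simpa only [zero_sub] using sum_le_sum_filter_pos fun _ hj _ => hj
  · obtain ⟨hnonneg, hlt⟩ := hv.1 i hi
    exact ⟨hnonneg, Int.le_sub_one_of_lt (hlt.trans_le (f.sum_shift_mul_le_sum_filter_pos g F i))⟩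

/-- Let `h = f·g` be a sandpile polynomial, where `f` and `g` have no common factor,
and suppose for every finite `F` the matrix `Δ' = Δ^g Δ^f` is a toppling matrix. Set
`γ' = Σ_{k ∈ G⁺} f_k g_{-k}` where `G⁺ = {k : f_k g_{-k} > 0}`. Then
`γ' ≥ γ_h = h 0 > 0` and every recurrent configuration `v ∈ R'_F` satisfies
`0 ≤ v i ≤ γ' - 1` for all `i ∈ F`. -/
theorem stmt7 {d : ℕ} (f g : (Fin d → ℤ) →₀ ℤ)
    (hsp : IsSandpileFun (fun n : Fin d → ℤ => ∑ k ∈ f.support, f k * g (n - k)))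
    (hrp : IsRelPrime (show AddMonoidAlgebra ℤ (Fin d → ℤ) from AddMonoidAlgebra.ofCoeff f)
      (show AddMonoidAlgebra ℤ (Fin d → ℤ) from AddMonoidAlgebra.ofCoeff g))
    (htop : ∀ F : Finset (Fin d → ℤ),
      (∀ i ∈ F, ∀ j ∈ F, i ≠ j → (∑ k ∈ F, g (i - k) * f (k - j)) ≤ 0) ∧
      (∀ i ∈ F, 0 < ∑ j ∈ F, ∑ k ∈ F, g (i - k) * f (k - j))) :
    (0 < ∑ k ∈ f.support, f k * g (0 - k)) ∧
    (∑ k ∈ f.support, f k * g (0 - k)) ≤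
      (∑ k ∈ f.support.filter (fun k => 0 < f k * g (-k)), f k * g (-k)) ∧
    ∀ F : Finset (Fin d → ℤ), ∀ v : (Fin d → ℤ) → ℤ,
      IsRecurrentOn (fun i j => ∑ k ∈ F, g (i - k) * f (k - j)) F v →
      ∀ i ∈ F, 0 ≤ v i ∧
        v i ≤ (∑ k ∈ f.support.filter (fun k => 0 < f k * g (-k)), f k * g (-k)) - 1 :=
  stmt7_general f g hsp
end

section
/- Let g = 2 − u ∈ Z[u^{±1}] and h = −2u^{-1} + 5 − 2u. If u ∈ ℓ^∞(Z,Z) satisfies 0 ≤ 2u_n − u_{n−1} ≤ 4 for all n ∈ Z, then 0 ≤ u_n ≤ 4 for all n ∈ Z. -/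
/-!
If `u (n - 1) ≤ 2 * u n` and `u n < 0`, then `u (n - 1) ≤ 2 * u n ≤ u n - 1` is again negative, so going
left from a negative term the sequence decreases by at least one at each step and cannot be bounded
below. Applied to `u` and to `4 - u`, this gives both bounds.
-/

theorem apply_sub_natCast_le_sub_of_neg {u : ℤ → ℤ} (hu : ∀ n, u (n - 1) ≤ 2 * u n)
    {n : ℤ} (hn : u n < 0) (k : ℕ) : u (n - k) ≤ u n - k := by
  induction k generalizing n with
  | zero => simp
  | succ k ih =>
    have hstep : u (n - 1) ≤ u n - 1 := by linarith [hu n]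
    have := ih (n := n - 1) (by omega)
    rw [Nat.cast_succ, ← sub_sub, sub_right_comm]
    omega

theorem nonneg_of_forall_le_of_le_two_mul {u : ℤ → ℤ} {C : ℤ} (hC : ∀ n, C ≤ u n)
    (hu : ∀ n, u (n - 1) ≤ 2 * u n) (n : ℤ) : 0 ≤ u n := by
  by_contra! hn
  have hdrift := apply_sub_natCast_le_sub_of_neg hu hn (-C).toNat
  have := hC (n - (-C).toNat)
  omega

/-- Let `g = 2 - u` and `h = -2u⁻¹ + 5 - 2u`. If `u ∈ ℓ^∞(ℤ,ℤ)` satisfies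
`0 ≤ (g·u)_n = 2 u_n - u_{n-1} ≤ 4` for all `n`, then `0 ≤ u_n ≤ 4` for all `n`. -/
theorem stmt9 (u : ℤ → ℤ) (hbdd : ∃ C : ℤ, ∀ n, |u n| ≤ C)
    (hgu : ∀ n : ℤ, 0 ≤ 2 * u n - u (n - 1) ∧ 2 * u n - u (n - 1) ≤ 4) :
    ∀ n : ℤ, 0 ≤ u n ∧ u n ≤ 4 := by
  obtain ⟨C, hC⟩ := hbdd
  intro n
  constructor
  · refine nonneg_of_forall_le_of_le_two_mul (C := -C) (fun m ↦ (abs_le.mp (hC m)).1) (fun m ↦ ?_) n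
    linarith [hgu m]
  · have := nonneg_of_forall_le_of_le_two_mul (u := fun m ↦ 4 - u m) (C := 4 - C)
      (fun m ↦ by linarith [(abs_le.mp (hC m)).2]) (fun m ↦ by linarith [hgu m]) n
    linarith
end

section
/- Let h ∈ R_d be expansive and ξ_h : ℓ^∞(Z^d,Z) → T^{Z^d} defined by ξ_h(v) = (w^h·v) mod 1. Then ker ξ_h ∩ ℓ^1(Z^d,Z) = h · R_d, the set of integral Laurent polynomial multiples of h. -/
/-!
Write `a ⋆ f` for the convolution of a finitely supported `a : ℤ^d → ℤ` with any `f`.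
Such convolutions commute and `h ⋆ w = δ₀`, so `h ⋆ (v ⋆ w) = v ⋆ (h ⋆ w) = v`.
If `v ⋆ w` is integer-valued, it is finitely supported because `w` is summable and hence
tends to `0` at infinity; so `q := v ⋆ w` is a Laurent polynomial with `h ⋆ q = v`.
Conversely, `v = h ⋆ q` gives `v ⋆ w = q ⋆ (h ⋆ w) = q`.
-/

open Filter Topology Finset Pointwise

section Convolve

variable {G R : Type*} [AddCommGroup G] [Ring R]

def convolve (a : G →₀ ℤ) (f : G → R) (n : G) : R :=
  ∑ j ∈ a.support, (a j : R) * f (n - j)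

lemma convolve_eq_sum_of_support_subset {a : G →₀ ℤ} {s : Finset G} (hs : a.support ⊆ s)
    (f : G → R) (n : G) : convolve a f n = ∑ j ∈ s, (a j : R) * f (n - j) :=
  sum_subset hs fun j _ hj => by simp [Finsupp.notMem_support_iff.mp hj]

lemma convolve_left_comm (a b : G →₀ ℤ) (f : G → R) :
    convolve a (convolve b f) = convolve b (convolve a f) := by
  funext n
  simp only [convolve, mul_sum]
  rw [sum_comm]
  refine sum_congr rfl fun j _ => sum_congr rfl fun k _ => ?_
  rw [sub_right_comm, ← mul_assoc, ← mul_assoc, (Int.cast_commute _ _).eq]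

lemma convolve_delta [DecidableEq G] (a : G →₀ ℤ) :
    convolve a (fun n => if n = 0 then (1 : R) else 0) = fun n => (a n : R) := by
  funext n
  simp only [convolve, sub_eq_zero, mul_ite, mul_one, mul_zero, sum_ite_eq]
  split_ifs with hn
  · rfl
  · rw [Finsupp.notMem_support_iff.mp hn, Int.cast_zero]

lemma convolve_convolve_of_convolve_eq_delta [DecidableEq G] {h : G →₀ ℤ} {w : G → R}
    (hw : convolve h w = fun n => if n = 0 then 1 else 0) (a : G →₀ ℤ) :
    convolve h (convolve a w) = fun n => (a n : R) := by
  rw [convolve_left_comm, hw, convolve_delta]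

lemma support_subset_add_of_eq_sum [DecidableEq G] {h q v : G →₀ ℤ}
    (hv : ∀ n, v n = ∑ k ∈ h.support, h k * q (n - k)) :
    v.support ⊆ h.support + q.support := by
  intro n hn
  rw [Finsupp.mem_support_iff, hv n] at hn
  obtain ⟨k, hk, hkq⟩ := exists_ne_zero_of_sum_ne_zero hn
  rw [← add_sub_cancel k n]
  exact Finset.add_mem_add hk (Finsupp.mem_support_iff.mpr (right_ne_zero_of_mul hkq))

lemma convolve_of_eq_sum {h q v : G →₀ ℤ} (hv : ∀ n, v n = ∑ k ∈ h.support, h k * q (n - k))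
    (f : G → R) : convolve v f = convolve h (convolve q f) := by
  classical
  funext n
  set S := h.support + q.support
  have shift (k : G) (hk : k ∈ h.support) :
      ∑ j ∈ S, (q (j - k) : R) * f (n - j) = convolve q f (n - k) := by
    rw [convolve_eq_sum_of_support_subset (s := S.image (· - k)), sum_image]
    · simp only [sub_sub_sub_cancel_right]
    · exact fun _ _ _ _ hjk => sub_left_injective hjk
    · intro i hi
      exact mem_image.mpr ⟨k + i, Finset.add_mem_add hk hi, add_sub_cancel_left k i⟩
  calc convolve v f n = ∑ j ∈ S, (v j : R) * f (n - j) :=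
        convolve_eq_sum_of_support_subset (support_subset_add_of_eq_sum hv) f n
    _ = ∑ k ∈ h.support, (h k : R) * ∑ j ∈ S, (q (j - k) : R) * f (n - j) := by
        simp only [hv, Int.cast_sum, Int.cast_mul, sum_mul, mul_sum, mul_assoc]
        exact sum_comm
    _ = convolve h (convolve q f) n := sum_congr rfl fun k hk => by rw [shift k hk]

end Convolve

lemma tendsto_convolve_cofinite_zero {G R : Type*} [AddCommGroup G] [Ring R] [TopologicalSpace R]
    [IsTopologicalRing R] {f : G → R} (hf : Tendsto f cofinite (𝓝 0)) (a : G →₀ ℤ) :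
    Tendsto (convolve a f) cofinite (𝓝 0) := by
  have := tendsto_finsetSum a.support fun j _ =>
    (hf.comp (sub_left_injective (b := j)).tendsto_cofinite).const_mul (a j : R)
  simp only [mul_zero, sum_const_zero] at this
  exact this

lemma Int.finite_support_of_tendsto_cofinite_zero {α : Type*} {g : α → ℤ}
    (hg : Tendsto (fun n => (g n : ℝ)) cofinite (𝓝 0)) : (Function.support g).Finite := by
  rw [← Int.cast_zero, ← Function.comp_def,
    ← Int.isClosedEmbedding_coe_real.isInducing.tendsto_nhds_iff, nhds_discrete,
    tendsto_pure] at hg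
  exact hg

theorem stmt12_general {d : ℕ} (h : (Fin d → ℤ) →₀ ℤ)
    (w : (Fin d → ℤ) → ℝ) (hw : Summable fun j => |w j|)
    (hhw : ∀ n : Fin d → ℤ,
      (∑ j ∈ h.support, (h j : ℝ) * w (n - j)) = if n = 0 then 1 else 0)
    (v : (Fin d → ℤ) →₀ ℤ) :
    (∀ n : Fin d → ℤ, ∃ m : ℤ,
        (∑ j ∈ v.support, (v j : ℝ) * w (n - j)) = (m : ℝ)) ↔
      ∃ q : (Fin d → ℤ) →₀ ℤ, ∀ n : Fin d → ℤ,
        v n = ∑ k ∈ h.support, h k * q (n - k) := by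
  have hδ : convolve h w = fun n => if n = 0 then 1 else 0 := funext hhw
  constructor
  · intro hv
    choose g hg using hv
    have hvw : convolve v w = fun n => (g n : ℝ) := funext hg
    have hfin : (Function.support g).Finite := Int.finite_support_of_tendsto_cofinite_zero <|
      hvw ▸ tendsto_convolve_cofinite_zero hw.of_abs.tendsto_cofinite_zero v
    refine ⟨Finsupp.ofSupportFinite g hfin, fun n => ?_⟩
    have := congrFun (convolve_convolve_of_convolve_eq_delta hδ v) n
    rw [hvw, convolve] at this
    exact_mod_cast this.symm
  · rintro ⟨q, hq⟩ n
    refine ⟨q n, ?_⟩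
    rw [← convolve, convolve_of_eq_sum hq w, convolve_convolve_of_convolve_eq_delta hδ q]

/-- Let `h` be expansive (no zeros on the unit torus) with homoclinic point
`w^h ∈ ℓ¹(ℤ^d, ℝ)`, `h · w^h = δ_0`, and let `ξ_h(v) = (w^h · v) mod 1`. Then for
`v ∈ ℓ¹(ℤ^d, ℤ)` (identified with finitely supported integer functions, i.e. Laurent
polynomials) one has `v ∈ ker ξ_h ↔ v ∈ h · R_d`: every coordinate of `w^h · v` is an
integer iff `v` is an integral Laurent polynomial multiple of `h`. -/
theorem stmt12 {d : ℕ} (h : (Fin d → ℤ) →₀ ℤ)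
    (hexp : ∀ z : Fin d → ℂ, (∀ i, ‖z i‖ = 1) →
      ∑ j ∈ h.support, (h j : ℂ) * ∏ i, z i ^ (j i) ≠ 0)
    (w : (Fin d → ℤ) → ℝ) (hw : Summable fun j => |w j|)
    (hhw : ∀ n : Fin d → ℤ,
      (∑ j ∈ h.support, (h j : ℝ) * w (n - j)) = if n = 0 then 1 else 0)
    (v : (Fin d → ℤ) →₀ ℤ) :
    (∀ n : Fin d → ℤ, ∃ m : ℤ,
        (∑ j ∈ v.support, (v j : ℝ) * w (n - j)) = (m : ℝ)) ↔
      ∃ q : (Fin d → ℤ) →₀ ℤ, ∀ n : Fin d → ℤ,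
        v n = ∑ k ∈ h.support, h k * q (n - k) :=
  stmt12_general h w hw hhw v
end

section
/- Let g ∈ R_d be expansive with homoclinic point w^g and δ_g > 0 the expansiveness constant of X_{g̃}. If u, v ∈ ℓ^∞(Z^d,Z) are bounded and their convolutions satisfy (g·u)_k = (g·v)_k for all k ∈ Q_{L+M}, then u_k = v_k for all k ∈ Q_L, where M depends only on g, the bound, and δ_g, and Q_K = {−K,…,K}^d. -/
/-!
Put `x = u - v`. Since `w^g` is a summable inverse of `g` under convolution and `x` is bounded,
`x = w^g * (g * x)`. The bounded sequence `g * x` vanishes on `Q_{L+M}`, so for `k ∈ Q_L` only the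
values of `w^g` outside `Q_M` enter `x_k = ∑ₙ w^g_{k-n} (g * x)_n`. Choosing `M` so large that this
tail of `w^g`, multiplied by the bound `‖g‖₁ · 2|C|` of `g * x`, is below `1`, the integer `x_k`
has absolute value `< 1`, hence vanishes.
-/

open Finset

section Convolution

variable {G : Type*} [AddCommGroup G]

def convFinsupp (g : G →₀ ℤ) (x : G → ℝ) (n : G) : ℝ :=
  ∑ j ∈ g.support, (g j : ℝ) * x (n - j)

lemma abs_convFinsupp_le (g : G →₀ ℤ) {x : G → ℝ} {D : ℝ} (hx : ∀ n, |x n| ≤ D) (n : G) :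
    |convFinsupp g x n| ≤ (∑ j ∈ g.support, |(g j : ℝ)|) * D := by
  rw [sum_mul]
  refine (abs_sum_le_sum_abs _ _).trans (sum_le_sum fun j _ => ?_)
  rw [abs_mul]
  exact mul_le_mul_of_nonneg_left (hx _) (abs_nonneg _)

lemma summable_mul_of_abs_le {w x : G → ℝ} (hw : Summable fun j => |w j|) {D : ℝ}
    (hx : ∀ n, |x n| ≤ D) (k : G) : Summable fun n => w (k - n) * x n :=
  ((hw.comp_injective sub_right_injective).mul_right D).of_norm_bounded fun n => by
    rw [Real.norm_eq_abs, abs_mul]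
    exact mul_le_mul_of_nonneg_left (hx n) (abs_nonneg _)

lemma tsum_mul_convFinsupp_eq_self [DecidableEq G] (g : G →₀ ℤ) {w : G → ℝ} (hw : Summable fun j => |w j|)
    (hgw : ∀ n, convFinsupp g w n = if n = 0 then 1 else 0) {x : G → ℝ} {D : ℝ}
    (hx : ∀ n, |x n| ≤ D) (k : G) :
    ∑' n, w (k - n) * convFinsupp g x n = x k := by
  have hshift (j : G) : Summable fun n => w (k - n) * x (n - j) :=
    summable_mul_of_abs_le hw (fun n => hx (n - j)) k
  calc ∑' n, w (k - n) * convFinsupp g x n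
      = ∑' n, ∑ j ∈ g.support, (g j : ℝ) * (w (k - n) * x (n - j)) := by
        refine tsum_congr fun n => ?_
        rw [convFinsupp, mul_sum]
        exact sum_congr rfl fun j _ => by ring
    _ = ∑ j ∈ g.support, (g j : ℝ) * ∑' n, w (k - n) * x (n - j) := by
        rw [Summable.tsum_finsetSum fun j _ => (hshift j).mul_left _]
        exact sum_congr rfl fun j _ => tsum_mul_left
    _ = ∑ j ∈ g.support, (g j : ℝ) * ∑' m, w (k - j - m) * x m := by
        refine sum_congr rfl fun j _ => ?_
        rw [← (Equiv.addRight j).tsum_eq]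
        simp only [Equiv.coe_addRight, add_sub_cancel_right, sub_add_eq_sub_sub, sub_right_comm]
    _ = ∑' m, convFinsupp g w (k - m) * x m := by
        simp_rw [← tsum_mul_left]
        rw [← Summable.tsum_finsetSum fun j _ => (summable_mul_of_abs_le hw hx _).mul_left _]
        refine tsum_congr fun m => ?_
        rw [convFinsupp, sum_mul]
        exact sum_congr rfl fun j _ => by rw [sub_right_comm]; ring
    _ = x k := by
        rw [tsum_eq_single k fun m hm => by simp [hgw, sub_eq_zero, Ne.symm hm]]
        simp [hgw]

lemma abs_le_mul_tsum_indicator_compl [DecidableEq G] (g : G →₀ ℤ) {w : G → ℝ} (hw : Summable fun j => |w j|)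
    (hgw : ∀ n, convFinsupp g w n = if n = 0 then 1 else 0) {x : G → ℝ} {D : ℝ}
    (hx : ∀ n, |x n| ≤ D) (s : Set G) (k : G)
    (hzero : ∀ n, k - n ∈ s → convFinsupp g x n = 0) :
    |x k| ≤ (∑ j ∈ g.support, |(g j : ℝ)|) * D * ∑' m, sᶜ.indicator (fun m => |w m|) m := by
  set B := (∑ j ∈ g.support, |(g j : ℝ)|) * D
  have hy := abs_convFinsupp_le g hx
  have hB : 0 ≤ B := (abs_nonneg _).trans (hy k)
  have htail : HasSum (fun n => B * sᶜ.indicator (fun m => |w m|) (k - n))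
      (B * ∑' m, sᶜ.indicator (fun m => |w m|) m) :=
    ((Equiv.subLeft k).hasSum_iff.mpr (hw.indicator _).hasSum).mul_left B
  rw [← tsum_mul_convFinsupp_eq_self g hw hgw hx k, ← Real.norm_eq_abs]
  refine tsum_of_norm_bounded htail fun n => ?_
  rw [Real.norm_eq_abs, abs_mul]
  by_cases hn : k - n ∈ s
  · rw [hzero n hn, abs_zero, mul_zero]
    exact mul_nonneg hB (Set.indicator_nonneg (fun _ _ => abs_nonneg _) _)
  · rw [Set.indicator_of_mem (Set.mem_compl hn), mul_comm]
    exact mul_le_mul_of_nonneg_right (hy n) (abs_nonneg _)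

end Convolution

lemma exists_finset_tsum_indicator_compl_lt {α : Type*} (f : α → ℝ) {ε : ℝ} (hε : 0 < ε) :
    ∃ s : Finset α, ∑' m, (↑s : Set α)ᶜ.indicator f m < ε := by
  obtain ⟨s, hs⟩ := ((tendsto_order.1 (tendsto_tsum_compl_atTop_zero f)).2 ε hε).exists
  exact ⟨s, by rwa [← _root_.tsum_subtype]⟩

lemma exists_forall_mem_abs_apply_le {d : ℕ} (s : Finset (Fin d → ℤ)) :
    ∃ M : ℕ, ∀ m ∈ s, ∀ i, |m i| ≤ M := by
  refine ⟨s.sup fun m => univ.sup fun i => (m i).natAbs, fun m hm i => ?_⟩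
  rw [Int.abs_eq_natAbs, Nat.cast_le]
  exact (le_sup (f := fun i => (m i).natAbs) (mem_univ i)).trans
    (le_sup (f := fun m => univ.sup fun i => (m i).natAbs) hm)

theorem stmt18_general {d : ℕ} (g : (Fin d → ℤ) →₀ ℤ)
    (w : (Fin d → ℤ) → ℝ) (hw : Summable fun j => |w j|)
    (hgw : ∀ n : Fin d → ℤ,
      (∑ j ∈ g.support, (g j : ℝ) * w (n - j)) = if n = 0 then 1 else 0)
    (C : ℤ) :
    ∃ M : ℕ, ∀ L : ℕ, ∀ u v : (Fin d → ℤ) → ℤ,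
      (∀ n, |u n| ≤ C) → (∀ n, |v n| ≤ C) →
      (∀ k : Fin d → ℤ, (∀ i, |k i| ≤ (L : ℤ) + (M : ℤ)) →
        (∑ j ∈ g.support, g j * u (k - j)) = ∑ j ∈ g.support, g j * v (k - j)) →
      ∀ k : Fin d → ℤ, (∀ i, |k i| ≤ (L : ℤ)) → u k = v k := by
  set B : ℝ := (∑ j ∈ g.support, |(g j : ℝ)|) * (2 * |(C : ℝ)|)
  have hB : 0 ≤ B := by positivity
  obtain ⟨s, hs⟩ := exists_finset_tsum_indicator_compl_lt (fun m => |w m|)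
    (by positivity : (0 : ℝ) < 1 / (B + 1))
  obtain ⟨M, hM⟩ := exists_forall_mem_abs_apply_le s
  refine ⟨M, fun L u v hu hv hconv k hk => ?_⟩
  set x : (Fin d → ℤ) → ℝ := fun n => ((u n - v n : ℤ) : ℝ)
  have hx (n : Fin d → ℤ) : |x n| ≤ 2 * |(C : ℝ)| := by
    have h : |u n - v n| ≤ 2 * |C| := by
      linarith [abs_sub (u n) (v n), hu n, hv n, le_abs_self C]
    simp only [x]
    exact_mod_cast h
  have hzero (n : Fin d → ℤ) (hn : k - n ∈ (s : Set (Fin d → ℤ))) : convFinsupp g x n = 0 := by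
    have hbox (i : Fin d) : |n i| ≤ L + M := by
      have h := abs_sub (k i) (k i - n i)
      rw [sub_sub_cancel] at h
      have hkn : |k i - n i| ≤ M := hM _ hn i
      linarith [hk i]
    simp only [convFinsupp, x, Int.cast_sub, mul_sub, sum_sub_distrib]
    exact_mod_cast sub_eq_zero.2 (hconv n hbox)
  have hlt : |x k| < 1 :=
    calc |x k| ≤ B * ∑' m, (↑s : Set (Fin d → ℤ))ᶜ.indicator (fun m => |w m|) m :=
          abs_le_mul_tsum_indicator_compl g hw hgw hx _ k hzero
      _ ≤ B * (1 / (B + 1)) := by gcongr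
      _ < 1 := by rw [mul_one_div, div_lt_one (by linarith)]; linarith
  simp only [x] at hlt
  exact sub_eq_zero.1 (Int.abs_lt_one_iff.1 (by exact_mod_cast hlt))

/-- Let `g` be expansive (no zeros on the unit torus) with homoclinic point `w^g`
(`g·w^g = δ_0`); expansiveness gives `δ_g > 0` for `X_{g̃}`. For every bound `C` there
exists `M` (depending only on `g`, the bound and `δ_g`) such that for all `L`: if
`u, v ∈ ℓ^∞(ℤ^d,ℤ)` with `‖u‖_∞, ‖v‖_∞ ≤ C` have convolutions agreeing,
`(g·u)_k = (g·v)_k` for all `k ∈ Q_{L+M}`, then `u_k = v_k` for all `k ∈ Q_L`,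
where `Q_K = {-K,…,K}^d`. -/
theorem stmt18 {d : ℕ} (g : (Fin d → ℤ) →₀ ℤ)
    (hexp : ∀ z : Fin d → ℂ, (∀ i, ‖z i‖ = 1) →
      ∑ j ∈ g.support, (g j : ℂ) * ∏ i, z i ^ (j i) ≠ 0)
    (w : (Fin d → ℤ) → ℝ) (hw : Summable fun j => |w j|)
    (hgw : ∀ n : Fin d → ℤ,
      (∑ j ∈ g.support, (g j : ℝ) * w (n - j)) = if n = 0 then 1 else 0)
    (C : ℤ) :
    ∃ M : ℕ, ∀ L : ℕ, ∀ u v : (Fin d → ℤ) → ℤ,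
      (∀ n, |u n| ≤ C) → (∀ n, |v n| ≤ C) →
      (∀ k : Fin d → ℤ, (∀ i, |k i| ≤ (L : ℤ) + (M : ℤ)) →
        (∑ j ∈ g.support, g j * u (k - j)) = ∑ j ∈ g.support, g j * v (k - j)) →
      ∀ k : Fin d → ℤ, (∀ i, |k i| ≤ (L : ℤ)) → u k = v k :=
  stmt18_general g w hw hgw C
end
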